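/- arXiv:2604.09939 — 11 statements merged into one kernel-verified Lean document; each statement's English description precedes it below -/
import Mathlib

section
/- In a normed lattice X, if every increasing norm-Cauchy sequence converges in norm, then X is norm complete (a Banach lattice). -/
/-!
A normed group is complete as soon as every absolutely convergent series converges. Splitting the
terms of such a series into positive and negative parts, `u k = (u k)⁺ - (u k)⁻`, writes it as the
difference of two absolutely convergent series of positive terms, whose partial sums are increasing
Cauchy sequences and hence converge by hypothesis.
-/

open Filter Topology Finset

section NormedLattice

variable {X : Type*} [NormedAddCommGroup X] [Lattice X] [IsOrderedAddMonoid X]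

lemma exists_tendsto_sum_range_of_nonneg_of_summable_norm
    (h : ∀ u : ℕ → X, Monotone u → CauchySeq u → ∃ x : X, Tendsto u atTop (𝓝 x))
    {e : ℕ → X} (he : ∀ k, 0 ≤ e k) (hs : Summable (‖e ·‖)) :
    ∃ x, Tendsto (fun n => ∑ k ∈ range n, e k) atTop (𝓝 x) :=
  h _ (fun _ _ hmn => sum_le_sum_of_subset_of_nonneg (range_subset_range.2 hmn)
      fun k _ _ => he k)
    ((cauchySeq_finset_of_summable_norm hs).comp_tendsto tendsto_finset_range)

variable [HasSolidNorm X]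

lemma norm_posPart_le (a : X) : ‖a⁺‖ ≤ ‖a‖ := by
  simpa using lipschitzWith_posPart.dist_le_mul a 0

lemma norm_negPart_le (a : X) : ‖a⁻‖ ≤ ‖a‖ := by
  simpa using lipschitzWith_negPart.dist_le_mul a 0

end NormedLattice

theorem stmt_0 {X : Type*} [NormedAddCommGroup X] [Lattice X] [HasSolidNorm X]
    [IsOrderedAddMonoid X]
    (h : ∀ u : ℕ → X, Monotone u → CauchySeq u → ∃ x : X, Tendsto u atTop (𝓝 x)) :
    CompleteSpace X := by
  refine NormedAddCommGroup.completeSpace_of_summable_imp_tendsto fun u hu => ?_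
  obtain ⟨x, hx⟩ := exists_tendsto_sum_range_of_nonneg_of_summable_norm h
    (fun k => posPart_nonneg (u k))
    (hu.of_nonneg_of_le (fun _ => norm_nonneg _) fun k => norm_posPart_le (u k))
  obtain ⟨y, hy⟩ := exists_tendsto_sum_range_of_nonneg_of_summable_norm h
    (fun k => negPart_nonneg (u k))
    (hu.of_nonneg_of_le (fun _ => norm_nonneg _) fun k => norm_negPart_le (u k))
  refine ⟨x - y, (hx.sub hy).congr fun n => ?_⟩
  simp only [← sum_sub_distrib, posPart_sub_negPart]
end

section
/- In a normed lattice X, if every norm-summable sequence in X is order bounded, then every increasing norm-Cauchy sequence in X is order bounded. -/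
/-!
Pass to a subsequence `y (φ k)` of the increasing Cauchy sequence whose increments
`d k = y (φ (k + 1)) - y (φ k) ≥ 0` have norm at most `4⁻¹ ^ (k + 1)`. Then the blown-up
increments `2 ^ (k + 1) • d k` are norm-summable, hence bounded above by some `c ≥ 0`, so
`d k ≤ c / 2 ^ (k + 1)` and the telescoping sums `y (φ K) - y (φ 0)` stay below `c`.
Since `X` is only a lattice-ordered group, the division by `2 ^ (k + 1)` is carried out by
multiplying through by `2 ^ K` and cancelling, which is possible in any lattice-ordered group.
-/

open Finset

section LatticeOrderedGroup

variable {X : Type*} [AddCommGroup X] [Lattice X] [IsOrderedAddMonoid X]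

lemma nonneg_of_two_pow_nsmul_nonneg {a : X} : ∀ {k : ℕ}, 0 ≤ 2 ^ k • a → 0 ≤ a
  | 0, h => by simpa using h
  | k + 1, h => nonneg_of_two_pow_nsmul_nonneg <| nsmul_two_semiclosed <| by
      rwa [smul_smul, ← pow_succ']

lemma two_pow_nsmul_sum_add_le {d : ℕ → X} {c : X} (hd : ∀ k, 2 ^ (k + 1) • d k ≤ c) :
    ∀ K, 2 ^ K • ∑ k ∈ range K, d k + c ≤ 2 ^ K • c
  | 0 => by simp
  | K + 1 => calc
      2 ^ (K + 1) • ∑ k ∈ range (K + 1), d k + c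
          = 2 • (2 ^ K • ∑ k ∈ range K, d k) + (2 ^ (K + 1) • d K + c) := by
        rw [sum_range_succ, smul_add, pow_succ', mul_smul, add_assoc]
      _ ≤ 2 • (2 ^ K • ∑ k ∈ range K, d k) + 2 • c := by
        grw [hd K, two_nsmul c]
      _ = 2 • (2 ^ K • ∑ k ∈ range K, d k + c) := (smul_add ..).symm
      _ ≤ 2 ^ (K + 1) • c := by
        grw [two_pow_nsmul_sum_add_le hd K, pow_succ', mul_smul]

lemma sum_le_of_two_pow_nsmul_le {d : ℕ → X} {c : X} (hd : ∀ k, 2 ^ (k + 1) • d k ≤ c)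
    (hc : 0 ≤ c) (K : ℕ) : ∑ k ∈ range K, d k ≤ c := by
  refine sub_nonneg.mp (nonneg_of_two_pow_nsmul_nonneg (k := K) ?_)
  rw [smul_sub, sub_nonneg]
  exact le_add_of_nonneg_right hc |>.trans (two_pow_nsmul_sum_add_le hd K)

end LatticeOrderedGroup

lemma summable_norm_two_pow_nsmul {X : Type*} [SeminormedAddCommGroup X] {d : ℕ → X}
    (hd : ∀ k, ‖d k‖ ≤ 4⁻¹ ^ (k + 1)) : Summable fun k => ‖2 ^ (k + 1) • d k‖ := by
  refine .of_nonneg_of_le (fun _ => norm_nonneg _) (fun k => ?_)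
    (summable_geometric_two.comp_injective (add_left_injective 1))
  calc ‖2 ^ (k + 1) • d k‖ ≤ 2 ^ (k + 1) * ‖d k‖ := by
        simpa using norm_nsmul_le (n := 2 ^ (k + 1)) (a := d k)
    _ ≤ 2 ^ (k + 1) * 4⁻¹ ^ (k + 1) := by gcongr; exact hd k
    _ = (1 / 2) ^ (k + 1) := by rw [← mul_pow]; norm_num

theorem stmt_4_general {X : Type*} [NormedAddCommGroup X] [Lattice X]
    [IsOrderedAddMonoid X]
    (h : ∀ x : ℕ → X, Summable (fun n => ‖x n‖) → ∃ a b : X, ∀ n, x n ∈ Set.Icc a b) :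
    ∀ y : ℕ → X, Monotone y → CauchySeq y → ∃ a b : X, ∀ n, y n ∈ Set.Icc a b := by
  intro y hy hcauchy
  obtain ⟨φ, hφ, hdist⟩ := Metric.exists_subseq_bounded_of_cauchySeq y hcauchy
    (fun k => 4⁻¹ ^ (k + 1)) (fun _ => by positivity)
  set d : ℕ → X := fun k => y (φ (k + 1)) - y (φ k)
  have hd : ∀ k, ‖d k‖ ≤ 4⁻¹ ^ (k + 1) := fun k => by
    simpa only [dist_eq_norm] using (hdist k _ (hφ k.lt_succ_self).le).le
  obtain ⟨_, b, hb⟩ := h (fun k => 2 ^ (k + 1) • d k) (summable_norm_two_pow_nsmul hd)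
  have hbound : ∀ K, y (φ K) ≤ y (φ 0) + b ⊔ 0 := fun K => by
    rw [← sub_le_iff_le_add', ← sum_range_sub (fun k => y (φ k))]
    exact sum_le_of_two_pow_nsmul_le (fun k => (hb k).2.trans le_sup_left) le_sup_right K
  exact ⟨y 0, y (φ 0) + b ⊔ 0, fun n => ⟨hy n.zero_le, (hy hφ.le_apply).trans (hbound n)⟩⟩

theorem stmt_4 {X : Type*} [NormedAddCommGroup X] [Lattice X] [HasSolidNorm X]
    [IsOrderedAddMonoid X]
    (h : ∀ x : ℕ → X, Summable (fun n => ‖x n‖) → ∃ a b : X, ∀ n, x n ∈ Set.Icc a b) :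
    ∀ y : ℕ → X, Monotone y → CauchySeq y → ∃ a b : X, ∀ n, y n ∈ Set.Icc a b :=
  stmt_4_general h
end

section
/- A normed lattice X is majorizing in its norm completion if and only if every norm-Cauchy sequence in X has an order bounded subsequence. -/
/-!
Majorizing ⇒ bounded subsequences: pass to a subsequence whose successive differences `g k`
satisfy `‖g k‖ < 2⁻ᵏ`. Then `∑ |g k|` converges in the completion and has a majorant `u` in `X`,
so every partial sum of `|g k|` is below `u`, and the subsequence stays in `[x₀ - u, x₀ + u]`.

Bounded subsequences ⇒ majorizing: approximate `z` by a sequence from `X`; it is Cauchy, so a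
subsequence lies in some `[a, b]`, and `z ≤ b` by passing to the limit.
-/

open Finset

section LatticeHom

variable {X Y : Type*} [Lattice X] [Lattice Y]

theorem monotone_of_map_sup {f : X → Y} (hf_sup : ∀ a b, f (a ⊔ b) = f a ⊔ f b) : Monotone f :=
  OrderHomClass.mono (SupHom.mk f hf_sup)

theorem map_le_map_iff_of_map_sup {f : X → Y} (hf_inj : Function.Injective f)
    (hf_sup : ∀ a b, f (a ⊔ b) = f a ⊔ f b) {a b : X} : f a ≤ f b ↔ a ≤ b := by
  refine ⟨fun h => ?_, fun h => monotone_of_map_sup hf_sup h⟩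
  rw [← sup_eq_right, ← hf_sup] at h
  exact sup_eq_right.mp (hf_inj h)

theorem map_abs_of_map_sup [AddGroup X] [AddGroup Y] (f : X →+ Y)
    (hf_sup : ∀ a b, f (a ⊔ b) = f a ⊔ f b) (a : X) : f |a| = |f a| := by
  rw [abs, abs, hf_sup, map_neg]

end LatticeHom

section LatticeOrderedGroup

variable {α : Type*} [AddCommGroup α] [Lattice α] [IsOrderedAddMonoid α]

theorem abs_sub_zero_le_sum_abs_sub (x : ℕ → α) (n : ℕ) :
    |x n - x 0| ≤ ∑ k ∈ range n, |x (k + 1) - x k| := by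
  rw [← Finset.sum_range_sub]
  exact Finset.le_sum_of_subadditive _ abs_zero.le abs_add_le _ _

theorem mem_Icc_of_abs_sub_le {a c u : α} (h : |a - c| ≤ u) : a ∈ Set.Icc (c - u) (c + u) := by
  obtain ⟨h_le, h_ge⟩ := abs_le'.mp h
  constructor
  · rw [sub_le_comm]
    simpa using h_ge
  · exact sub_le_iff_le_add'.mp h_le

end LatticeOrderedGroup

theorem CauchySeq.exists_strictMono_norm_sub_lt {X : Type*} [SeminormedAddCommGroup X]
    {x : ℕ → X} (hx : CauchySeq x) {ε : ℕ → ℝ} (hε : ∀ n, 0 < ε n) :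
    ∃ φ : ℕ → ℕ, StrictMono φ ∧ ∀ n, ‖x (φ (n + 1)) - x (φ n)‖ < ε n := by
  simpa only [← dist_eq_norm, Set.mem_ofPred_eq] using
    hx.subseq_mem (V := fun n => {p | dist p.1 p.2 < ε n})
      fun n => Metric.dist_mem_uniformity (hε n)

section Majorizing

variable {X Y : Type*} [NormedAddCommGroup X] [Lattice X] [HasSolidNorm X]
  [IsOrderedAddMonoid X] [NormedAddCommGroup Y] [Lattice Y] [HasSolidNorm Y]
  [IsOrderedAddMonoid Y]

theorem exists_sum_abs_le_of_majorizing [CompleteSpace Y] (f : X →+ Y) (hf_iso : Isometry f)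
    (hf_sup : ∀ a b, f (a ⊔ b) = f a ⊔ f b) (hmaj : ∀ z : Y, ∃ x : X, z ≤ f x)
    {g : ℕ → X} (hg : Summable fun n => ‖g n‖) :
    ∃ u : X, ∀ n, ∑ k ∈ range n, |g k| ≤ u := by
  have hf_norm := hf_iso.norm_map_of_map_zero (map_zero f)
  have hsum : Summable fun n => f |g n| :=
    Summable.of_norm (by simpa only [hf_norm, norm_abs_eq_norm] using hg)
  obtain ⟨u, hu⟩ := hmaj (∑' n, f |g n|)
  refine ⟨u, fun n => (map_le_map_iff_of_map_sup hf_iso.injective hf_sup).mp ?_⟩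
  calc f (∑ k ∈ range n, |g k|) = ∑ k ∈ range n, f |g k| := map_sum f _ _
    _ ≤ ∑' k, f |g k| := hsum.sum_le_tsum _ fun k _ => by
      rw [map_abs_of_map_sup f hf_sup]
      exact abs_nonneg _
    _ ≤ f u := hu

theorem exists_subseq_mem_Icc_of_majorizing [CompleteSpace Y] (f : X →+ Y)
    (hf_iso : Isometry f) (hf_sup : ∀ a b, f (a ⊔ b) = f a ⊔ f b)
    (hmaj : ∀ z : Y, ∃ x : X, z ≤ f x) {x : ℕ → X} (hx : CauchySeq x) :
    ∃ φ : ℕ → ℕ, StrictMono φ ∧ ∃ a b : X, ∀ n, x (φ n) ∈ Set.Icc a b := by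
  obtain ⟨φ, hφ, hfast⟩ := hx.exists_strictMono_norm_sub_lt (ε := fun n => (1 / 2 : ℝ) ^ n)
    fun n => by positivity
  have hg : Summable fun n => ‖x (φ (n + 1)) - x (φ n)‖ :=
    summable_geometric_two.of_nonneg_of_le (fun _ => norm_nonneg _) fun n => (hfast n).le
  obtain ⟨u, hu⟩ := exists_sum_abs_le_of_majorizing f hf_iso hf_sup hmaj hg
  exact ⟨φ, hφ, x (φ 0) - u, x (φ 0) + u, fun n =>
    mem_Icc_of_abs_sub_le ((abs_sub_zero_le_sum_abs_sub (x ∘ φ) n).trans (hu n))⟩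

end Majorizing

theorem majorizing_of_exists_subseq_mem_Icc {X Y : Type*} [UniformSpace X] [Preorder X]
    [UniformSpace Y] [FrechetUrysohnSpace Y] [Preorder Y] [ClosedIicTopology Y] {f : X → Y}
    (hf_unif : IsUniformInducing f) (hf_mono : Monotone f) (hf_dense : DenseRange f)
    (H : ∀ x : ℕ → X, CauchySeq x →
      ∃ φ : ℕ → ℕ, StrictMono φ ∧ ∃ a b : X, ∀ n, x (φ n) ∈ Set.Icc a b)
    (z : Y) : ∃ x : X, z ≤ f x := by
  obtain ⟨y, hy_range, hy_lim⟩ :=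
    mem_closure_iff_seq_limit.mp (hf_dense.closure_range ▸ Set.mem_univ z)
  choose x hx using hy_range
  obtain rfl : f ∘ x = y := funext hx
  have hx_cauchy : CauchySeq x := hf_unif.cauchy_map_iff.mp hy_lim.cauchySeq
  obtain ⟨φ, hφ, _, b, hab⟩ := H x hx_cauchy
  exact ⟨b, le_of_tendsto' (hy_lim.comp hφ.tendsto_atTop) fun n => hf_mono (hab n).2⟩

theorem stmt_6 {X Y : Type*} [NormedAddCommGroup X] [Lattice X] [HasSolidNorm X]
    [IsOrderedAddMonoid X]
    [NormedAddCommGroup Y] [Lattice Y] [HasSolidNorm Y] [IsOrderedAddMonoid Y]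
    [CompleteSpace Y]
    (f : X → Y) (hf_iso : Isometry f)
    (hf_add : ∀ a b : X, f (a + b) = f a + f b)
    (hf_sup : ∀ a b : X, f (a ⊔ b) = f a ⊔ f b)
    (hf_dense : DenseRange f) :
    (∀ z : Y, ∃ x : X, z ≤ f x) ↔
      (∀ x : ℕ → X, CauchySeq x →
        ∃ φ : ℕ → ℕ, StrictMono φ ∧ ∃ a b : X, ∀ n, x (φ n) ∈ Set.Icc a b) :=
  ⟨fun hmaj _ hx => exists_subseq_mem_Icc_of_majorizing (AddMonoidHom.mk' f hf_add) hf_iso hf_sup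
      hmaj hx,
    majorizing_of_exists_subseq_mem_Icc hf_iso.isUniformInducing (monotone_of_map_sup hf_sup)
      hf_dense⟩
end

section
/- In a normed lattice X, if every norm-null sequence has an order bounded subsequence, then every norm-null net (x_α) in X contains, as a subset of its range, a sequence that converges relatively uniformly to 0. -/
/-!
Choose `t n` with `‖x (t n)‖ ≤ 1 / (n + 1) ^ 2`. Then `(n + 1) • x (t n)` is still norm-null, so
along a subsequence `φ` it lies in some order interval `[a, b]`, whence
`|x (t (φ n))| ≤ (φ n + 1)⁻¹ • (|a| ⊔ |b|)`: the sequence `x ∘ t ∘ φ` converges to `0` relatively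
uniformly with regulator `|a| ⊔ |b|`.
-/

open Filter Topology

section LatticeModule

variable {X : Type*} [AddCommGroup X] [Lattice X]

theorem abs_smul_le_smul_abs [Module ℝ X] [PosSMulMono ℝ X] {r : ℝ} (hr : 0 ≤ r) (v : X) :
    |r • v| ≤ r • |v| := by
  refine abs_le'.2 ⟨smul_le_smul_of_nonneg_left (le_abs_self v) hr, ?_⟩
  rw [← smul_neg]
  exact smul_le_smul_of_nonneg_left (neg_le_abs v) hr

variable [IsOrderedAddMonoid X]

theorem abs_le_sup_abs_abs {a b c : X} (hab : a ≤ b) (hbc : b ≤ c) : |b| ≤ |a| ⊔ |c| :=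
  abs_le'.2 ⟨hbc.trans ((le_abs_self c).trans le_sup_right),
    (neg_le_neg hab).trans ((neg_le_abs a).trans le_sup_left)⟩

variable [Module ℝ X]

theorem inv_two_pow_smul_nonneg {v : X} (hv : 0 ≤ v) (k : ℕ) : 0 ≤ ((2 : ℝ) ^ k)⁻¹ • v := by
  induction k with
  | zero => simpa using hv
  | succ k ih =>
    -- in a lattice-ordered group `0 ≤ 2 • w` forces `0 ≤ w`
    refine nsmul_two_semiclosed ?_
    rwa [two_nsmul, ← add_smul, pow_succ, mul_inv, ← mul_two, inv_mul_cancel_right₀ two_ne_zero]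

theorem natCast_div_two_pow_smul_nonneg {v : X} (hv : 0 ≤ v) (m k : ℕ) :
    0 ≤ ((m : ℝ) / 2 ^ k) • v := by
  rw [div_eq_mul_inv, mul_smul, Nat.cast_smul_eq_nsmul]
  exact nsmul_nonneg (inv_two_pow_smul_nonneg hv k) m

-- `r • v` is the limit of the dyadic multiples `(⌊r * 2 ^ k⌋ / 2 ^ k) • v`.
theorem posSMulMono_of_isClosed_nonneg [TopologicalSpace X] [ContinuousSMul ℝ X]
    (hX : IsClosed {v : X | 0 ≤ v}) : PosSMulMono ℝ X := by
  refine PosSMulMono.of_smul_nonneg fun r hr v hv => ?_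
  have hdyadic : Tendsto (fun k : ℕ => (⌊r * 2 ^ k⌋₊ : ℝ) / 2 ^ k) atTop (𝓝 r) :=
    (tendsto_nat_floor_mul_div_atTop hr).comp
      (tendsto_pow_atTop_atTop_of_one_lt one_lt_two)
  exact hX.mem_of_tendsto (hdyadic.smul_const v)
    (Eventually.of_forall fun k => natCast_div_two_pow_smul_nonneg hv _ k)

theorem exists_forall_ge_abs_le_smul_of_abs_le_smul [PosSMulMono ℝ X] {z : ℕ → X} {c : ℕ → ℝ}
    {u : X} (hu : 0 ≤ u) (hc : Tendsto c atTop (𝓝 0)) (hz : ∀ n, |z n| ≤ c n • u)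
    {ε : ℝ} (hε : 0 < ε) : ∃ N, ∀ n ≥ N, |z n| ≤ ε • u := by
  obtain ⟨N, hN⟩ := eventually_atTop.1 (hc.eventually (eventually_le_nhds hε))
  exact ⟨N, fun n hn => (hz n).trans (smul_le_smul_of_nonneg_right (hN n hn) hu)⟩

end LatticeModule

theorem HasSolidNorm.posSMulMono {X : Type*} [NormedAddCommGroup X] [Lattice X] [HasSolidNorm X]
    [IsOrderedAddMonoid X] [NormedSpace ℝ X] : PosSMulMono ℝ X :=
  posSMulMono_of_isClosed_nonneg isClosed_nonneg

theorem tendsto_norm_succ_smul_zero {X : Type*} [SeminormedAddCommGroup X] [NormedSpace ℝ X]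
    {y : ℕ → X} (hy : ∀ n, ‖y n‖ ≤ 1 / ((n : ℝ) + 1) ^ 2) :
    Tendsto (fun n : ℕ => ‖((n : ℝ) + 1) • y n‖) atTop (𝓝 0) := by
  refine squeeze_zero (fun n => norm_nonneg _) (fun n => ?_)
    tendsto_one_div_add_atTop_nhds_zero_nat
  have hn : (0 : ℝ) < (n : ℝ) + 1 := by positivity
  calc ‖((n : ℝ) + 1) • y n‖ = ((n : ℝ) + 1) * ‖y n‖ := by
        rw [norm_smul, Real.norm_of_nonneg hn.le]
    _ ≤ ((n : ℝ) + 1) * (1 / ((n : ℝ) + 1) ^ 2) := by gcongr; exact hy n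
    _ = 1 / ((n : ℝ) + 1) := by field_simp

theorem stmt_7 {X : Type*} [NormedAddCommGroup X] [Lattice X] [HasSolidNorm X] [IsOrderedAddMonoid X] [NormedSpace ℝ X]
    (h : ∀ x : ℕ → X, Tendsto (fun n => ‖x n‖) atTop (𝓝 0) →
      ∃ φ : ℕ → ℕ, StrictMono φ ∧ ∃ a b : X, ∀ n, x (φ n) ∈ Set.Icc a b)
    (ι : Type*) [Preorder ι] [IsDirected ι (· ≤ ·)] [Nonempty ι]
    (x : ι → X) (hx : Tendsto (fun α => ‖x α‖) atTop (𝓝 0)) :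
    ∃ s : ℕ → ι, ∃ u : X, 0 ≤ u ∧
      ∀ ε : ℝ, 0 < ε → ∃ N : ℕ, ∀ n ≥ N, |x (s n)| ≤ ε • u := by
  have : PosSMulMono ℝ X := HasSolidNorm.posSMulMono
  choose t ht using fun n : ℕ =>
    (hx.eventually (eventually_le_nhds (by positivity : (0 : ℝ) < 1 / ((n : ℝ) + 1) ^ 2))).exists
  obtain ⟨φ, hφ, a, b, hab⟩ :=
    h (fun n => ((n : ℝ) + 1) • x (t n)) (tendsto_norm_succ_smul_zero ht)
  refine ⟨t ∘ φ, |a| ⊔ |b|, le_sup_of_le_left (abs_nonneg a), fun ε hε =>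
    exists_forall_ge_abs_le_smul_of_abs_le_smul (le_sup_of_le_left (abs_nonneg a))
      (tendsto_one_div_add_atTop_nhds_zero_nat.comp hφ.tendsto_atTop) (fun n => ?_) hε⟩
  have hn : (0 : ℝ) < (φ n : ℝ) + 1 := by positivity
  calc |x (t (φ n))| = |(1 / ((φ n : ℝ) + 1)) • ((φ n + 1 : ℝ) • x (t (φ n)))| := by
        rw [smul_smul, one_div_mul_cancel hn.ne', one_smul]
    _ ≤ (1 / ((φ n : ℝ) + 1)) • |((φ n + 1 : ℝ) • x (t (φ n)))| :=
        abs_smul_le_smul_abs (by positivity) _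
    _ ≤ (1 / ((φ n : ℝ) + 1)) • (|a| ⊔ |b|) :=
        smul_le_smul_of_nonneg_left (abs_le_sup_abs_abs (hab n).1 (hab n).2) (by positivity)
end

section
/- In a normed lattice X, if every norm-null net in X contains (as a set) a relatively uniformly null sequence, then every relatively uniformly closed subset of X is norm closed. -/
open Filter Topology

universe u

/-- The hypothesis on nets is only available for index types in universe `u`, so a norm-null
sequence is fed to it through the index type `ULift ℕ`. -/
lemma exists_seq_mem_range_ruNull_of_tendsto_norm_zero {X : Type u} [NormedAddCommGroup X]
    [Lattice X] [SMul ℝ X]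
    (h : ∀ (ι : Type u) [Preorder ι] [IsDirected ι (· ≤ ·)] [Nonempty ι]
      (x : ι → X), Tendsto (fun α => ‖x α‖) atTop (𝓝 0) →
      ∃ s : ℕ → X, (∀ n, s n ∈ Set.range x) ∧ ∃ u : X, 0 ≤ u ∧
        ∀ ε : ℝ, 0 < ε → ∃ N : ℕ, ∀ n ≥ N, |s n| ≤ ε • u)
    (c : ℕ → X) (hc : Tendsto (fun n => ‖c n‖) atTop (𝓝 0)) :
    ∃ s : ℕ → X, (∀ n, s n ∈ Set.range c) ∧ ∃ u : X, 0 ≤ u ∧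
      ∀ ε : ℝ, 0 < ε → ∃ N : ℕ, ∀ n ≥ N, |s n| ≤ ε • u := by
  obtain ⟨s, hs_range, hs_null⟩ :=
    h (ULift.{u} ℕ) (c ∘ ULift.down) (hc.comp (ULift.orderIso (α := ℕ)).tendsto_atTop)
  exact ⟨s, fun n => Set.range_comp_subset_range _ _ (hs_range n), hs_null⟩

theorem stmt_8_general {X : Type u} [NormedAddCommGroup X] [Lattice X]
    [NormedSpace ℝ X]
    (h : ∀ (ι : Type u) [Preorder ι] [IsDirected ι (· ≤ ·)] [Nonempty ι]
      (x : ι → X), Tendsto (fun α => ‖x α‖) atTop (𝓝 0) →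
      ∃ s : ℕ → X, (∀ n, s n ∈ Set.range x) ∧ ∃ u : X, 0 ≤ u ∧
        ∀ ε : ℝ, 0 < ε → ∃ N : ℕ, ∀ n ≥ N, |s n| ≤ ε • u)
    (C : Set X)
    (hC : ∀ (s : ℕ → X) (x : X), (∀ n, s n ∈ C) →
      (∃ u : X, 0 ≤ u ∧ ∀ ε : ℝ, 0 < ε → ∃ N : ℕ, ∀ n ≥ N, |x - s n| ≤ ε • u) →
      x ∈ C) :
    IsClosed C := by
  refine IsSeqClosed.isClosed fun c x hc hcx => ?_
  obtain ⟨s, hs_range, u, hu, hs_null⟩ := exists_seq_mem_range_ruNull_of_tendsto_norm_zero h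
    (fun n => c n - x) (tendsto_iff_norm_sub_tendsto_zero.mp hcx)
  -- `x + s n` is some `c m`, and `x - (x + s n) = -s n` has the same modulus as `s n`.
  refine hC (fun n => x + s n) x (fun n => ?_) ⟨u, hu, fun ε hε => ?_⟩
  · obtain ⟨m, hm⟩ := hs_range n
    simpa [← hm] using hc m
  · obtain ⟨N, hN⟩ := hs_null ε hε
    exact ⟨N, fun n hn => by simpa using hN n hn⟩

theorem stmt_8 {X : Type u} [NormedAddCommGroup X] [Lattice X] [HasSolidNorm X]
    [IsOrderedAddMonoid X] [NormedSpace ℝ X]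
    (h : ∀ (ι : Type u) [Preorder ι] [IsDirected ι (· ≤ ·)] [Nonempty ι]
      (x : ι → X), Tendsto (fun α => ‖x α‖) atTop (𝓝 0) →
      ∃ s : ℕ → X, (∀ n, s n ∈ Set.range x) ∧ ∃ u : X, 0 ≤ u ∧
        ∀ ε : ℝ, 0 < ε → ∃ N : ℕ, ∀ n ≥ N, |s n| ≤ ε • u)
    (C : Set X)
    (hC : ∀ (s : ℕ → X) (x : X), (∀ n, s n ∈ C) →
      (∃ u : X, 0 ≤ u ∧ ∀ ε : ℝ, 0 < ε → ∃ N : ℕ, ∀ n ≥ N, |x - s n| ≤ ε • u) →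
      x ∈ C) :
    IsClosed C :=
  stmt_8_general h C hC
end

section
/- In a normed lattice X, if every relatively uniformly closed subset of X is norm closed, then every norm-null sequence in X has an order bounded subsequence. -/
open Filter Topology

/-
If no subsequence of the norm-null sequence `x` is order bounded, every order interval contains
only finitely many terms `x n`. The set `S` of nonzero terms is then relatively uniformly closed:
the tail of a sequence in `S` converging relatively uniformly to `y` lies in an order interval
around `y`, hence takes only finitely many values, and since it also converges to `y` in norm,
`y` is one of these values. By hypothesis `S` is norm closed, so it contains the norm limit `0`
of `x`, which is absurd.
-/

theorem mem_Icc_of_abs_sub_le_s9 {G : Type*} [AddCommGroup G] [Lattice G] [IsOrderedAddMonoid G]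
    {a b u : G} (h : |a - b| ≤ u) : b ∈ Set.Icc (a - u) (a + u) := by
  obtain ⟨hle, hge⟩ := abs_le'.mp h
  rw [neg_sub] at hge
  exact ⟨sub_le_comm.mp hle, sub_le_iff_le_add'.mp hge⟩

section NormedLattice

variable {X : Type*} [NormedAddCommGroup X] [Lattice X] [NormedSpace ℝ X]

def TendstoRelUniformly (s : ℕ → X) (x : X) : Prop :=
  ∃ u : X, 0 ≤ u ∧ ∀ ε : ℝ, 0 < ε → ∃ N : ℕ, ∀ n ≥ N, |x - s n| ≤ ε • u

def IsRelUniformlyClosed (C : Set X) : Prop :=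
  ∀ (s : ℕ → X) (x : X), (∀ n, s n ∈ C) → TendstoRelUniformly s x → x ∈ C

variable {s : ℕ → X} {x : X}

theorem TendstoRelUniformly.exists_eventually_mem_Icc [IsOrderedAddMonoid X]
    (h : TendstoRelUniformly s x) : ∃ u : X, ∀ᶠ n in atTop, s n ∈ Set.Icc (x - u) (x + u) := by
  obtain ⟨u, -, hu⟩ := h
  obtain ⟨N, hN⟩ := hu 1 one_pos
  exact ⟨u, eventually_atTop.2 ⟨N, fun n hn => mem_Icc_of_abs_sub_le_s9 (by simpa using hN n hn)⟩⟩

theorem TendstoRelUniformly.tendsto [HasSolidNorm X] (h : TendstoRelUniformly s x) :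
    Tendsto s atTop (𝓝 x) := by
  obtain ⟨u, -, hu⟩ := h
  rw [Metric.tendsto_atTop]
  intro δ hδ
  set ε := δ / (‖u‖ + 1)
  have hε : 0 < ε := by positivity
  obtain ⟨N, hN⟩ := hu ε hε
  refine ⟨N, fun n hn => ?_⟩
  have hnorm : ‖x - s n‖ ≤ ‖ε • u‖ := norm_le_norm_of_abs_le_abs ((hN n hn).trans (le_abs_self _))
  calc dist (s n) x = ‖x - s n‖ := dist_comm (s n) x ▸ dist_eq_norm x (s n)
    _ ≤ ε * ‖u‖ := by rwa [norm_smul, Real.norm_of_nonneg hε.le] at hnorm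
    _ < ε * (‖u‖ + 1) := by gcongr; linarith
    _ = δ := div_mul_cancel₀ δ (by positivity)

theorem isRelUniformlyClosed_of_finite_inter_Icc [IsOrderedAddMonoid X] [HasSolidNorm X]
    {S : Set X} (hS : ∀ a b : X, (S ∩ Set.Icc a b).Finite) : IsRelUniformlyClosed S := by
  intro s y hsS hsy
  obtain ⟨u, hu⟩ := hsy.exists_eventually_mem_Icc
  have hy : y ∈ S ∩ Set.Icc (y - u) (y + u) :=
    (hS _ _).isClosed.mem_of_tendsto hsy.tendsto (hu.mono fun n hn => ⟨hsS n, hn⟩)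
  exact hy.1

end NormedLattice

theorem stmt_9 {X : Type*} [NormedAddCommGroup X] [Lattice X] [HasSolidNorm X] [IsOrderedAddMonoid X] [NormedSpace ℝ X]
    (h : ∀ C : Set X,
      (∀ (s : ℕ → X) (x : X), (∀ n, s n ∈ C) →
        (∃ u : X, 0 ≤ u ∧ ∀ ε : ℝ, 0 < ε → ∃ N : ℕ, ∀ n ≥ N, |x - s n| ≤ ε • u) →
        x ∈ C) → IsClosed C)
    (x : ℕ → X) (hx : Tendsto (fun n => ‖x n‖) atTop (𝓝 0)) :
    ∃ φ : ℕ → ℕ, StrictMono φ ∧ ∃ a b : X, ∀ n, x (φ n) ∈ Set.Icc a b := by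
  by_contra! hcon
  have hfin : ∀ a b : X, {n | x n ∈ Set.Icc a b}.Finite := fun a b => by
    by_contra hinf
    obtain ⟨φ, hφ, hφab⟩ :=
      extraction_of_frequently_atTop (Nat.frequently_atTop_iff_infinite.2 hinf)
    obtain ⟨n, hn⟩ := hcon φ hφ a b
    exact hn (hφab n)
  set S := Set.range x \ {0}
  have hS : ∀ a b : X, (S ∩ Set.Icc a b).Finite := fun a b =>
    ((hfin a b).image x).subset (by rintro _ ⟨⟨⟨n, rfl⟩, -⟩, hn⟩; exact ⟨n, hn, rfl⟩)
  have hSclosed : IsClosed S := h S (isRelUniformlyClosed_of_finite_inter_Icc hS)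
  have hxS : ∀ᶠ n in atTop, x n ∈ S := by
    rw [← Nat.cofinite_eq_atTop]
    refine (hfin 0 0).eventually_cofinite_notMem.mono fun n hn => ⟨⟨n, rfl⟩, fun h0 => hn ?_⟩
    simpa [Set.Icc_self] using h0
  exact (hSclosed.mem_of_tendsto (tendsto_zero_iff_norm_tendsto_zero.2 hx) hxS).2 rfl
end

section
/- In a normed lattice X, if every norm-null net has an order bounded tail, then X has a strong unit u and the norm of X is equivalent to the order unit norm ‖·‖_u. -/
open Filter Topology

universe u

/-!
Index a net by pairs `(n, y)` with `‖y‖ ≤ 1`, directed by `n` alone, and send `(n, y)` to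
`(n + 1)⁻¹ • y`. It is norm-null, so some tail lies in an order interval `[a, b]`; a tail contains
a whole level `n`, hence the unit ball is dominated by `u = (n + 1) • (|a| ⊔ |b|)` and
`|x| ≤ ‖x‖ • u`. Conversely, solidity of the norm gives `‖x‖ ≤ r ‖u‖` whenever `|x| ≤ r • u`.

Monotonicity of scalar multiplication is not assumed: it holds because the positive cone is closed
and, in a lattice ordered group, stable under halving, hence under nonnegative dyadic scalars.
-/

section LatticeOrderedGroup

variable {G : Type*} [AddCommGroup G] [Lattice G] [IsOrderedAddMonoid G] [Module ℝ G]

lemma inv_two_pow_smul_nonneg_s10 {z : G} (hz : 0 ≤ z) (k : ℕ) : 0 ≤ ((2 : ℝ) ^ k)⁻¹ • z := by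
  induction k with
  | zero => simpa using hz
  | succ k ih =>
    apply nsmul_two_semiclosed
    rw [two_nsmul, ← add_smul]
    convert ih using 2
    ring

lemma dyadic_smul_nonneg {z : G} (hz : 0 ≤ z) (m k : ℕ) : 0 ≤ ((m : ℝ) / 2 ^ k) • z := by
  rw [div_eq_mul_inv, mul_smul, Nat.cast_smul_eq_nsmul]
  exact nsmul_nonneg (inv_two_pow_smul_nonneg_s10 hz k) m

instance OrderClosedTopology.toPosSMulMono [TopologicalSpace G] [OrderClosedTopology G]
    [ContinuousSMul ℝ G] : PosSMulMono ℝ G := by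
  refine PosSMulMono.of_smul_nonneg fun r hr z hz => ?_
  have hdyadic : Tendsto (fun k : ℕ => ((⌊r * 2 ^ k⌋₊ : ℝ) / 2 ^ k)) atTop (𝓝 r) :=
    (tendsto_nat_floor_mul_div_atTop hr).comp (tendsto_pow_atTop_atTop_of_one_lt one_lt_two)
  exact isClosed_Ici.mem_of_tendsto (hdyadic.smul_const z)
    (Eventually.of_forall fun k => dyadic_smul_nonneg hz _ k)

end LatticeOrderedGroup

section PosSMulMono

variable {G : Type*} [AddCommGroup G] [Lattice G] [Module ℝ G] [PosSMulMono ℝ G]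

lemma abs_smul_le_smul_abs_s10 {r : ℝ} (hr : 0 ≤ r) (x : G) : |r • x| ≤ r • |x| :=
  abs_le'.2 ⟨smul_le_smul_of_nonneg_left (le_abs_self x) hr,
    smul_neg r x ▸ smul_le_smul_of_nonneg_left (neg_le_abs x) hr⟩

lemma abs_le_smul_of_abs_inv_smul_le {c : ℝ} (hc : 0 < c) {x v : G} (h : |c⁻¹ • x| ≤ v) :
    |x| ≤ c • v :=
  calc |x| = |c • c⁻¹ • x| := by rw [smul_inv_smul₀ hc.ne']
    _ ≤ c • |c⁻¹ • x| := abs_smul_le_smul_abs_s10 hc.le _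
    _ ≤ c • v := smul_le_smul_of_nonneg_left h hc.le

end PosSMulMono

lemma abs_le_abs_sup_abs_of_mem_Icc {G : Type*} [AddCommGroup G] [Lattice G] [IsOrderedAddMonoid G]
    {a b x : G} (hx : x ∈ Set.Icc a b) : |x| ≤ |a| ⊔ |b| :=
  abs_le'.2 ⟨hx.2.trans ((le_abs_self b).trans le_sup_right),
    (neg_le_neg hx.1).trans ((neg_le_abs a).trans le_sup_left)⟩

section OrderUnitNorm

variable {X : Type*} [AddGroup X] [Lattice X] [SMul ℝ X]

noncomputable def orderUnitNorm (u x : X) : ℝ := sInf {r : ℝ | 0 ≤ r ∧ |x| ≤ r • u}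

lemma orderUnitNorm_le {u x : X} {r : ℝ} (hr : 0 ≤ r) (h : |x| ≤ r • u) : orderUnitNorm u x ≤ r :=
  csInf_le ⟨0, fun _ hs => hs.1⟩ ⟨hr, h⟩

lemma orderUnitNorm_nonneg (u x : X) : 0 ≤ orderUnitNorm u x :=
  Real.sInf_nonneg fun _ hs => hs.1

end OrderUnitNorm

def ByLevel (α : Type*) : Type _ := ℕ × α

namespace ByLevel

variable {α : Type*}

instance : Preorder (ByLevel α) := Preorder.lift Prod.fst

instance : IsDirected (ByLevel α) (· ≤ ·) :=
  ⟨fun p q => ⟨(max p.1 q.1, p.2), le_max_left p.1 q.1, le_max_right p.1 q.1⟩⟩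

instance [Nonempty α] : Nonempty (ByLevel α) := inferInstanceAs (Nonempty (ℕ × α))

lemma tendsto_level [Nonempty α] : Tendsto (fun p : ByLevel α => p.1) atTop atTop :=
  tendsto_atTop_atTop.2 fun n => ⟨show ByLevel α from (n, Classical.arbitrary α), fun _ hp => hp⟩

end ByLevel

def HasOrderBoundedNullTails (X : Type u) [NormedAddCommGroup X] [Preorder X] : Prop :=
  ∀ (ι : Type u) [Preorder ι] [IsDirected ι (· ≤ ·)] [Nonempty ι] (x : ι → X),
    Tendsto (fun α => ‖x α‖) atTop (𝓝 0) → ∃ α₀ : ι, ∃ a b : X, ∀ α ≥ α₀, x α ∈ Set.Icc a b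

section NormedLattice

variable {X : Type u} [NormedAddCommGroup X] [Lattice X] [IsOrderedAddMonoid X] [HasSolidNorm X]
  [NormedSpace ℝ X]

lemma norm_le_norm_mul_orderUnitNorm {u x : X} (hx : ∃ r : ℝ, 0 ≤ r ∧ |x| ≤ r • u) :
    ‖x‖ ≤ ‖u‖ * orderUnitNorm u x := by
  obtain ⟨r, hr⟩ := hx
  rw [orderUnitNorm, ← smul_eq_mul, ← Real.sInf_smul_of_nonneg (norm_nonneg u)]
  refine le_csInf ⟨‖u‖ * r, r, hr, rfl⟩ ?_
  rintro _ ⟨s, ⟨hs, hxs⟩, rfl⟩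
  calc ‖x‖ ≤ ‖s • u‖ := HasSolidNorm.solid (by rwa [abs_of_nonneg ((abs_nonneg x).trans hxs)])
    _ = ‖u‖ • s := by rw [norm_smul, Real.norm_of_nonneg hs, smul_eq_mul, mul_comm]

lemma abs_le_norm_smul_of_forall_norm_le_one {v : X} (hv : ∀ y : X, ‖y‖ ≤ 1 → |y| ≤ v) (x : X) :
    |x| ≤ ‖x‖ • v := by
  rcases eq_or_ne x 0 with rfl | hx
  · simp
  have hnx : 0 < ‖x‖ := norm_pos_iff.2 hx
  exact abs_le_smul_of_abs_inv_smul_le hnx (hv _ (by rw [norm_smul, norm_inv, norm_norm,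
    inv_mul_cancel₀ hnx.ne']))

lemma HasOrderBoundedNullTails.exists_abs_le_of_norm_le_one (h : HasOrderBoundedNullTails X) :
    ∃ v : X, ∀ y : X, ‖y‖ ≤ 1 → |y| ≤ v := by
  have : Nonempty {y : X // ‖y‖ ≤ 1} := ⟨0, norm_zero.le.trans zero_le_one⟩
  let ι := ByLevel {y : X // ‖y‖ ≤ 1}
  have hnull : Tendsto (fun p : ι => ‖((p.1 : ℝ) + 1)⁻¹ • (p.2 : X)‖) atTop (𝓝 0) := by
    refine squeeze_zero (fun _ => norm_nonneg _) (fun p => ?_)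
      ((tendsto_one_div_add_atTop_nhds_zero_nat (𝕜 := ℝ)).comp ByLevel.tendsto_level)
    rw [norm_smul, norm_inv, Real.norm_of_nonneg (by positivity), ← div_eq_inv_mul]
    exact div_le_div_of_nonneg_right p.2.2 (by positivity)
  obtain ⟨p₀, a, b, hab⟩ := h ι _ hnull
  refine ⟨((p₀.1 : ℝ) + 1) • (|a| ⊔ |b|), fun y hy => abs_le_smul_of_abs_inv_smul_le
    (by positivity) (abs_le_abs_sup_abs_of_mem_Icc (hab (p₀.1, ⟨y, hy⟩) (le_refl p₀.1)))⟩

end NormedLattice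

theorem stmt_10 {X : Type u} [NormedAddCommGroup X] [Lattice X] [IsOrderedAddMonoid X] [HasSolidNorm X] [NormedSpace ℝ X]
    (h : ∀ (ι : Type u) [Preorder ι] [IsDirected ι (· ≤ ·)] [Nonempty ι]
      (x : ι → X), Tendsto (fun α => ‖x α‖) atTop (𝓝 0) →
      ∃ α₀ : ι, ∃ a b : X, ∀ α ≥ α₀, x α ∈ Set.Icc a b) :
    ∃ u : X, 0 ≤ u ∧ (∀ x : X, ∃ r : ℝ, 0 ≤ r ∧ |x| ≤ r • u) ∧
      ∃ c C : ℝ, 0 < c ∧ 0 < C ∧ ∀ x : X,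
        c * sInf {r : ℝ | 0 ≤ r ∧ |x| ≤ r • u} ≤ ‖x‖ ∧
        ‖x‖ ≤ C * sInf {r : ℝ | 0 ≤ r ∧ |x| ≤ r • u} := by
  obtain ⟨u, hu⟩ := HasOrderBoundedNullTails.exists_abs_le_of_norm_le_one h
  have hdom : ∀ x : X, |x| ≤ ‖x‖ • u := abs_le_norm_smul_of_forall_norm_le_one hu
  have hunit : ∀ x : X, ∃ r : ℝ, 0 ≤ r ∧ |x| ≤ r • u := fun x => ⟨‖x‖, norm_nonneg x, hdom x⟩
  refine ⟨u, by simpa using hu 0 (by simp), hunit, 1, ‖u‖ + 1, one_pos, by positivity,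
    fun x => ⟨?_, ?_⟩⟩
  · rw [one_mul]
    exact orderUnitNorm_le (norm_nonneg x) (hdom x)
  · calc ‖x‖ ≤ ‖u‖ * orderUnitNorm u x := norm_le_norm_mul_orderUnitNorm (hunit x)
      _ ≤ (‖u‖ + 1) * orderUnitNorm u x :=
        mul_le_mul_of_nonneg_right (le_add_of_nonneg_right zero_le_one) (orderUnitNorm_nonneg u x)
end

section
/- Let I be a non-meager P-ideal on ℕ (characterized by: I is a proper ideal containing all finite sets, and for every sequence (A_n) ⊆ I with A_n ⊆ ℕ \ {1,...,n−1} there is an infinite M ⊆ ℕ with ⋃_{n∈M} A_n ∈ I). Let G = {bounded sequences whose support lies in I} and H = {h ∈ ℓ∞ : 2^k h(k) → 0}, and X = G + H ⊆ ℓ∞ with the sup norm. Then the sequence (2^{−n} e_n), where e_n is the indicator of {n}, is not order bounded in X. -/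
open Filter Topology

/-- Bounded real sequences whose support belongs to the ideal `I`. -/
def memG (I : Set (Set ℕ)) (g : ℕ → ℝ) : Prop :=
  (∃ C : ℝ, ∀ k, |g k| ≤ C) ∧ Function.support g ∈ I

/-- Bounded real sequences `h` with `2^k h(k) → 0`. -/
def memH (h : ℕ → ℝ) : Prop :=
  (∃ C : ℝ, ∀ k, |h k| ≤ C) ∧ Tendsto (fun k => (2 : ℝ) ^ k * h k) atTop (𝓝 0)

/-- The sum `X = G + H`. -/
def memX (I : Set (Set ℕ)) (f : ℕ → ℝ) : Prop :=
  ∃ g h : ℕ → ℝ, memG I g ∧ memH h ∧ f = g + h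

/-! An upper bound `b = g + h ∈ X` of the sequence `2⁻ⁿ eₙ` would satisfy `b k ≥ 2⁻ᵏ` for all `k`.
Since `I` is proper and contains the finite sets, `g` vanishes at infinitely many `k`, and there
`2ᵏ b k = 2ᵏ h k`, which tends to `0`. -/

theorem compl_infinite_of_mem_ideal {I : Set (Set ℕ)}
    (hI_union : ∀ A B : Set ℕ, A ∈ I → B ∈ I → A ∪ B ∈ I)
    (hI_fin : ∀ A : Set ℕ, A.Finite → A ∈ I) (hI_proper : (Set.univ : Set ℕ) ∉ I)
    {A : Set ℕ} (hA : A ∈ I) : Aᶜ.Infinite := by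
  intro hfin
  apply hI_proper
  simpa only [Set.union_compl_self] using hI_union _ _ hA (hI_fin _ hfin)

theorem memX.frequently_two_pow_mul_lt_one {I : Set (Set ℕ)}
    (hI_union : ∀ A B : Set ℕ, A ∈ I → B ∈ I → A ∪ B ∈ I)
    (hI_fin : ∀ A : Set ℕ, A.Finite → A ∈ I) (hI_proper : (Set.univ : Set ℕ) ∉ I)
    {b : ℕ → ℝ} (hb : memX I b) : ∃ᶠ k in atTop, (2 : ℝ) ^ k * b k < 1 := by
  obtain ⟨g, h, ⟨-, hg⟩, ⟨-, hh⟩, rfl⟩ := hb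
  have hg_zero : ∃ᶠ k in atTop, g k = 0 := by
    rw [Nat.frequently_atTop_iff_infinite, ← Function.compl_support]
    exact compl_infinite_of_mem_ideal hI_union hI_fin hI_proper hg
  have hh_small : ∀ᶠ k in atTop, (2 : ℝ) ^ k * h k < 1 := hh.eventually_lt_const one_pos
  refine (hg_zero.and_eventually hh_small).mono fun k ⟨hgk, hhk⟩ => ?_
  simpa only [Pi.add_apply, hgk, zero_add] using hhk

theorem stmt_14_general (I : Set (Set ℕ))
    (hI_union : ∀ A B : Set ℕ, A ∈ I → B ∈ I → A ∪ B ∈ I)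
    (hI_fin : ∀ A : Set ℕ, A.Finite → A ∈ I)
    (hI_proper : (Set.univ : Set ℕ) ∉ I) :
    ¬ ∃ a b : ℕ → ℝ, memX I a ∧ memX I b ∧
      ∀ n k : ℕ, a k ≤ ((2 : ℝ) ^ n)⁻¹ * (if k = n then 1 else 0) ∧
        ((2 : ℝ) ^ n)⁻¹ * (if k = n then 1 else 0) ≤ b k := by
  rintro ⟨a, b, -, hbX, hbound⟩
  obtain ⟨k, hk⟩ := (hbX.frequently_two_pow_mul_lt_one hI_union hI_fin hI_proper).exists
  have hbk : ((2 : ℝ) ^ k)⁻¹ ≤ b k := by simpa only [if_true, mul_one] using (hbound k k).2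
  have hpos : (0 : ℝ) < 2 ^ k := by positivity
  have : 1 ≤ (2 : ℝ) ^ k * b k := by
    simpa only [mul_inv_cancel₀ hpos.ne'] using mul_le_mul_of_nonneg_left hbk hpos.le
  exact hk.not_ge this

theorem stmt_14 (I : Set (Set ℕ))
    (hI_subset : ∀ A B : Set ℕ, A ∈ I → B ⊆ A → B ∈ I)
    (hI_union : ∀ A B : Set ℕ, A ∈ I → B ∈ I → A ∪ B ∈ I)
    (hI_fin : ∀ A : Set ℕ, A.Finite → A ∈ I)
    (hI_proper : (Set.univ : Set ℕ) ∉ I)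
    (hI_P : ∀ A : ℕ → Set ℕ, (∀ n, A n ∈ I) → (∀ n, A n ⊆ {k | n ≤ k}) →
      ∃ M : Set ℕ, M.Infinite ∧ (⋃ n ∈ M, A n) ∈ I) :
    ¬ ∃ a b : ℕ → ℝ, memX I a ∧ memX I b ∧
      ∀ n k : ℕ, a k ≤ ((2 : ℝ) ^ n)⁻¹ * (if k = n then 1 else 0) ∧
        ((2 : ℝ) ^ n)⁻¹ * (if k = n then 1 else 0) ≤ b k :=
  stmt_14_general I hI_union hI_fin hI_proper
end

section
/- With I a non-meager P-ideal on ℕ, G = {bounded sequences with support in I}, H = {h ∈ ℓ∞ : 2^k h(k) → 0}, and X = G + H with the sup norm: every sequence (f_n) ⊆ X with ‖f_n‖_∞ → 0 has an order bounded subsequence in X. -/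
open Filter Topology

/-!
Pass to a subsequence with `‖f n‖∞ ≤ 4⁻ⁿ`. Off the support `Aₙ ∈ I` of its `G`-part, `f n` decays
like an element of `H`, so beyond some cut-off `Kₙ` it is at most `2⁻ⁿ 2⁻ᵏ` there. The P-property
applied to the sets `(Aₙ ∪ [0, Kₙ)) ∩ [n, ∞) ∈ I` yields an infinite `S` whose union `U` of these
sets lies in `I`. Along `S`, the sequence is dominated by `𝟙_U + 4⁻ᵏ + ∑ₙ |fₙ| 𝟙_{(Aₙ ∪ [0, Kₙ))ᶜ}`:
the first term is in `G`, the other two are in `H` (the series by dominated convergence). For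
`m ∈ S`, the bound on `|f m k|` comes from `4⁻ᵐ ≤ 4⁻ᵏ` if `k < m`, from `𝟙_U` if `k` lies in the
`m`-th set, and from the `m`-th term of the series otherwise.
-/

variable {I : Set (Set ℕ)}

theorem memG.neg {g : ℕ → ℝ} (hg : memG I g) : memG I (-g) := by
  obtain ⟨⟨C, hC⟩, hsupp⟩ := hg
  exact ⟨⟨C, fun k => by simpa using hC k⟩, by rwa [Function.support_neg]⟩

theorem memH.neg {h : ℕ → ℝ} (hh : memH h) : memH (-h) := by
  obtain ⟨⟨C, hC⟩, htend⟩ := hh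
  exact ⟨⟨C, fun k => by simpa using hC k⟩, by simpa using htend.neg⟩

theorem memX.neg {f : ℕ → ℝ} (hf : memX I f) : memX I (-f) := by
  obtain ⟨g, h, hg, hh, rfl⟩ := hf
  exact ⟨-g, -h, hg.neg, hh.neg, neg_add _ _⟩

theorem memH.add {h₁ h₂ : ℕ → ℝ} (hh₁ : memH h₁) (hh₂ : memH h₂) : memH (h₁ + h₂) := by
  obtain ⟨⟨C₁, hC₁⟩, htend₁⟩ := hh₁
  obtain ⟨⟨C₂, hC₂⟩, htend₂⟩ := hh₂
  refine ⟨⟨C₁ + C₂, fun k => (abs_add_le _ _).trans (add_le_add (hC₁ k) (hC₂ k))⟩, ?_⟩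
  simpa [mul_add] using htend₁.add htend₂

theorem memG_indicator_one {S : Set ℕ} (hS : S ∈ I) : memG I (S.indicator 1) := by
  refine ⟨⟨1, fun k => ?_⟩, by simpa [Set.support_indicator] using hS⟩
  by_cases hk : k ∈ S <;> simp [hk]

theorem memH_quarter_pow : memH fun k => (1 / 4 : ℝ) ^ k := by
  refine ⟨⟨1, fun k => ?_⟩, ?_⟩
  · rw [abs_of_nonneg (by positivity)]
    exact pow_le_one₀ (by norm_num) (by norm_num)
  · simpa only [← mul_pow, show (2 : ℝ) * (1 / 4) = 1 / 2 by norm_num] using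
      tendsto_pow_atTop_nhds_zero_of_lt_one (r := (1 / 2 : ℝ)) (by norm_num) (by norm_num)
section Series

variable {e : ℕ → ℕ → ℝ} {c : ℕ → ℝ}

theorem summable_abs_of_two_pow_mul_abs_le (hc : Summable c)
    (hbound : ∀ n k, (2 : ℝ) ^ k * |e n k| ≤ c n) (k : ℕ) : Summable fun n => |e n k| :=
  hc.of_nonneg_of_le (fun n => abs_nonneg _) fun n =>
    (le_mul_of_one_le_left (abs_nonneg _) (one_le_pow₀ (by norm_num))).trans (hbound n k)

theorem memH_tsum_abs (hc : Summable c) (hbound : ∀ n k, (2 : ℝ) ^ k * |e n k| ≤ c n)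
    (htend : ∀ n, Tendsto (fun k => (2 : ℝ) ^ k * e n k) atTop (𝓝 0)) :
    memH fun k => ∑' n, |e n k| := by
  have hsum := summable_abs_of_two_pow_mul_abs_le hc hbound
  refine ⟨⟨∑' n, c n, fun k => ?_⟩, ?_⟩
  · rw [abs_of_nonneg (tsum_nonneg fun n => abs_nonneg _)]
    exact (hsum k).tsum_le_tsum (fun n =>
      (le_mul_of_one_le_left (abs_nonneg _) (one_le_pow₀ (by norm_num))).trans (hbound n k)) hc
  · simp_rw [← tsum_mul_left]
    rw [← tsum_zero]
    refine tendsto_tsum_of_dominated_convergence hc (fun n => ?_) ?_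
    · simpa [abs_mul] using (htend n).abs
    · filter_upwards with k n
      rw [Real.norm_of_nonneg (by positivity)]
      exact hbound n k

end Series

theorem memX.exists_tendsto_indicator_compl {f : ℕ → ℝ} (hf : memX I f) :
    ∃ A ∈ I, Tendsto (fun k => (2 : ℝ) ^ k * Aᶜ.indicator f k) atTop (𝓝 0) := by
  obtain ⟨g, h, ⟨-, hg⟩, ⟨-, hh⟩, rfl⟩ := hf
  refine ⟨Function.support g, hg, squeeze_zero_norm (fun k => ?_) (by simpa using hh.norm)⟩
  by_cases hk : k ∈ Function.support g
  · simp [hk]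
  · simp_all

theorem Set.indicator_compl_union_Iio_of_le {α M : Type*} [LinearOrder α] [Zero M] {f : α → M}
    {A : Set α} {K k : α} (hk : K ≤ k) :
    (A ∪ Set.Iio K)ᶜ.indicator f k = Aᶜ.indicator f k := by
  by_cases hkA : k ∈ A <;> simp [hkA, hk]

theorem exists_infinite_abs_le_memX
    (hI_subset : ∀ A B : Set ℕ, A ∈ I → B ⊆ A → B ∈ I)
    (hI_union : ∀ A B : Set ℕ, A ∈ I → B ∈ I → A ∪ B ∈ I)
    (hI_fin : ∀ A : Set ℕ, A.Finite → A ∈ I)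
    (hI_P : ∀ A : ℕ → Set ℕ, (∀ n, A n ∈ I) → (∀ n, A n ⊆ {k | n ≤ k}) →
      ∃ M : Set ℕ, M.Infinite ∧ (⋃ n ∈ M, A n) ∈ I)
    {f : ℕ → ℕ → ℝ} (hf : ∀ n, memX I (f n)) (hf_le : ∀ n k, |f n k| ≤ (1 / 4 : ℝ) ^ n) :
    ∃ S : Set ℕ, S.Infinite ∧ ∃ b : ℕ → ℝ, memX I b ∧ ∀ m ∈ S, ∀ k, |f m k| ≤ b k := by
  choose A hA hA_tend using fun n => (hf n).exists_tendsto_indicator_compl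
  have hhalf : ∀ n : ℕ, ‖(0 : ℝ)‖ < (1 / 2) ^ n := fun n => by rw [norm_zero]; positivity
  choose K hK using fun n =>
    eventually_atTop.mp ((hA_tend n).norm.eventually (eventually_le_nhds (hhalf n)))
  set B : ℕ → Set ℕ := fun n => A n ∪ Set.Iio (K n)
  obtain ⟨S, hS, hU⟩ := hI_P (fun n => B n ∩ Set.Ici n)
    (fun n => hI_subset _ _ (hI_union _ _ (hA n) (hI_fin _ (Set.finite_Iio _)))
      Set.inter_subset_left)
    (fun n k hk => hk.2)
  set e : ℕ → ℕ → ℝ := fun n => (B n)ᶜ.indicator (f n)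
  have he_eq : ∀ n k, K n ≤ k → e n k = (A n)ᶜ.indicator (f n) k := fun _ _ =>
    Set.indicator_compl_union_Iio_of_le
  have he_bound : ∀ n k, (2 : ℝ) ^ k * |e n k| ≤ (1 / 2) ^ n := by
    intro n k
    by_cases hk : K n ≤ k
    · simpa [he_eq n k hk, abs_mul] using hK n k hk
    · simp [e, B, not_le.mp hk]
  have he_tend : ∀ n, Tendsto (fun k => (2 : ℝ) ^ k * e n k) atTop (𝓝 0) := fun n =>
    (hA_tend n).congr' <| by
      filter_upwards [eventually_ge_atTop (K n)] with k hk
      rw [he_eq n k hk]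
  have he_summable := summable_abs_of_two_pow_mul_abs_le summable_geometric_two he_bound
  refine ⟨S, hS, (⋃ n ∈ S, B n ∩ Set.Ici n).indicator 1 +
      ((fun k => (1 / 4 : ℝ) ^ k) + fun k => ∑' n, |e n k|),
    ⟨_, _, memG_indicator_one hU,
      memH_quarter_pow.add (memH_tsum_abs summable_geometric_two he_bound he_tend), rfl⟩, ?_⟩
  intro m hm k
  have htail : 0 ≤ ∑' n, |e n k| := tsum_nonneg fun n => abs_nonneg _
  simp only [Pi.add_apply]
  by_cases hkm : k ∈ B m ∩ Set.Ici m
  · rw [Set.indicator_of_mem (Set.mem_biUnion hm hkm), Pi.one_apply]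
    have : (1 / 4 : ℝ) ^ m ≤ 1 := pow_le_one₀ (by norm_num) (by norm_num)
    linarith [hf_le m k, pow_nonneg (by norm_num : (0 : ℝ) ≤ 1 / 4) k]
  have hind : 0 ≤ (⋃ n ∈ S, B n ∩ Set.Ici n).indicator (1 : ℕ → ℝ) k :=
    Set.indicator_nonneg (fun _ _ => zero_le_one) k
  by_cases hmk : m ≤ k
  · have : |f m k| ≤ ∑' n, |e n k| := by
      have hkB : k ∉ B m := fun h => hkm ⟨h, hmk⟩
      simpa [e, Set.indicator_of_mem (Set.mem_compl hkB)] using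
        (he_summable k).le_tsum m fun n _ => abs_nonneg _
    linarith [pow_nonneg (by norm_num : (0 : ℝ) ≤ 1 / 4) k]
  · have : (1 / 4 : ℝ) ^ m ≤ (1 / 4) ^ k :=
      pow_le_pow_of_le_one (by norm_num) (by norm_num) (not_le.mp hmk).le
    linarith [hf_le m k]

theorem stmt_15_general (I : Set (Set ℕ))
    (hI_subset : ∀ A B : Set ℕ, A ∈ I → B ⊆ A → B ∈ I)
    (hI_union : ∀ A B : Set ℕ, A ∈ I → B ∈ I → A ∪ B ∈ I)
    (hI_fin : ∀ A : Set ℕ, A.Finite → A ∈ I)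
    (hI_P : ∀ A : ℕ → Set ℕ, (∀ n, A n ∈ I) → (∀ n, A n ⊆ {k | n ≤ k}) →
      ∃ M : Set ℕ, M.Infinite ∧ (⋃ n ∈ M, A n) ∈ I)
    (f : ℕ → ℕ → ℝ) (hf : ∀ n, memX I (f n))
    (M : ℕ → ℝ) (hM : ∀ n k, |f n k| ≤ M n) (hM0 : Tendsto M atTop (𝓝 0)) :
    ∃ φ : ℕ → ℕ, StrictMono φ ∧ ∃ a b : ℕ → ℝ, memX I a ∧ memX I b ∧
      ∀ n k, a k ≤ f (φ n) k ∧ f (φ n) k ≤ b k := by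
  obtain ⟨φ, hφ, hMφ⟩ : ∃ φ : ℕ → ℕ, StrictMono φ ∧ ∀ n, M (φ n) ≤ (1 / 4 : ℝ) ^ n :=
    extraction_forall_of_eventually fun n =>
      hM0.eventually (eventually_le_nhds (by positivity))
  obtain ⟨S, hS, b, hb, hfb⟩ := exists_infinite_abs_le_memX hI_subset hI_union hI_fin hI_P
    (fun n => hf (φ n)) (fun n k => (hM _ k).trans (hMφ n))
  exact ⟨φ ∘ Nat.nth (· ∈ S), hφ.comp (Nat.nth_strictMono hS), -b, b, hb.neg, hb,
    fun n k => abs_le.mp (hfb _ (Nat.nth_mem_of_infinite hS n) k)⟩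

theorem stmt_15 (I : Set (Set ℕ))
    (hI_subset : ∀ A B : Set ℕ, A ∈ I → B ⊆ A → B ∈ I)
    (hI_union : ∀ A B : Set ℕ, A ∈ I → B ∈ I → A ∪ B ∈ I)
    (hI_fin : ∀ A : Set ℕ, A.Finite → A ∈ I)
    (hI_proper : (Set.univ : Set ℕ) ∉ I)
    (hI_P : ∀ A : ℕ → Set ℕ, (∀ n, A n ∈ I) → (∀ n, A n ⊆ {k | n ≤ k}) →
      ∃ M : Set ℕ, M.Infinite ∧ (⋃ n ∈ M, A n) ∈ I)
    (f : ℕ → ℕ → ℝ) (hf : ∀ n, memX I (f n))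
    (M : ℕ → ℝ) (hM : ∀ n k, |f n k| ≤ M n) (hM0 : Tendsto M atTop (𝓝 0)) :
    ∃ φ : ℕ → ℕ, StrictMono φ ∧ ∃ a b : ℕ → ℝ, memX I a ∧ memX I b ∧
      ∀ n k, a k ≤ f (φ n) k ∧ f (φ n) k ≤ b k :=
  stmt_15_general I hI_subset hI_union hI_fin hI_P f hf M hM hM0
end

section
/- Let X be a normed lattice and (e_n) ⊆ X_+ a sequence with ‖e_n‖ ≤ 2^{−n}. Define μ(A) = inf{‖x‖ : x ∈ X_+, x ≥ e_i for all i ∈ A} for A ⊆ ℕ (with inf ∅ = ∞). Then μ is a submeasure: μ(∅) = 0, μ is monotone, and μ(A ∪ B) ≤ μ(A) + μ(B); moreover μ(A) ≤ 2^{1−min A} for every nonempty finite A. -/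
open scoped ENNReal

/-!
Monotonicity is immediate; the other bounds come from exhibiting a positive upper bound: `0` for
the empty set, `x + y` for a union, and `∑ i ∈ A, e i` for a finite set `A`, whose norm is at most
`∑ i ≥ min A, 2⁻ⁱ = 2 ^ (1 - min A)`.
-/

section UpperBoundSubmeasure

variable {X : Type*} [SeminormedAddCommGroup X] [PartialOrder X]

noncomputable def upperBoundSubmeasure (e : ℕ → X) (A : Set ℕ) : ℝ≥0∞ :=
  sInf {r : ℝ≥0∞ | ∃ x : X, 0 ≤ x ∧ (∀ i ∈ A, e i ≤ x) ∧ r = ENNReal.ofReal ‖x‖}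

theorem upperBoundSubmeasure_le {e : ℕ → X} {A : Set ℕ} {x : X} (hx : 0 ≤ x)
    (hxA : ∀ i ∈ A, e i ≤ x) : upperBoundSubmeasure e A ≤ ENNReal.ofReal ‖x‖ :=
  sInf_le ⟨x, hx, hxA, rfl⟩

theorem upperBoundSubmeasure_empty (e : ℕ → X) : upperBoundSubmeasure e ∅ = 0 :=
  nonpos_iff_eq_zero.mp <| by
    simpa using upperBoundSubmeasure_le (e := e) (A := ∅) le_rfl (by simp)

theorem upperBoundSubmeasure_mono (e : ℕ → X) {A B : Set ℕ} (hAB : A ⊆ B) :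
    upperBoundSubmeasure e A ≤ upperBoundSubmeasure e B :=
  sInf_le_sInf fun _ ⟨x, hx, hxB, hr⟩ => ⟨x, hx, fun i hi => hxB i (hAB hi), hr⟩

theorem upperBoundSubmeasure_union_le [IsOrderedAddMonoid X] (e : ℕ → X) (A B : Set ℕ) :
    upperBoundSubmeasure e (A ∪ B) ≤ upperBoundSubmeasure e A + upperBoundSubmeasure e B := by
  conv_rhs => rw [upperBoundSubmeasure, upperBoundSubmeasure, sInf_eq_iInf, sInf_eq_iInf]
  refine ENNReal.le_iInf₂_add_iInf₂ ?_
  rintro _ ⟨x, hx, hxA, rfl⟩ _ ⟨y, hy, hyB, rfl⟩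
  have hxyAB : ∀ i ∈ A ∪ B, e i ≤ x + y := by
    rintro i (hi | hi)
    · exact (hxA i hi).trans (le_add_of_nonneg_right hy)
    · exact (hyB i hi).trans (le_add_of_nonneg_left hx)
  calc upperBoundSubmeasure e (A ∪ B) ≤ ENNReal.ofReal ‖x + y‖ :=
        upperBoundSubmeasure_le (add_nonneg hx hy) hxyAB
    _ ≤ ENNReal.ofReal (‖x‖ + ‖y‖) := ENNReal.ofReal_le_ofReal (norm_add_le x y)
    _ = ENNReal.ofReal ‖x‖ + ENNReal.ofReal ‖y‖ := ENNReal.ofReal_add (norm_nonneg x) (norm_nonneg y)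

theorem upperBoundSubmeasure_le_sum_norm [IsOrderedAddMonoid X] {e : ℕ → X}
    (he_nonneg : ∀ n, 0 ≤ e n) (s : Finset ℕ) :
    upperBoundSubmeasure e s ≤ ENNReal.ofReal (∑ i ∈ s, ‖e i‖) := by
  refine (upperBoundSubmeasure_le (Finset.sum_nonneg fun i _ => he_nonneg i)
    fun i hi => Finset.single_le_sum (fun j _ => he_nonneg j) hi).trans ?_
  exact ENNReal.ofReal_le_ofReal (norm_sum_le _ _)

end UpperBoundSubmeasure

theorem sum_inv_two_pow_le_of_forall_le {s : Finset ℕ} {m : ℕ} (hs : ∀ i ∈ s, m ≤ i) :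
    ∑ i ∈ s, (2 : ℝ)⁻¹ ^ i ≤ 2 * 2⁻¹ ^ m := by
  have hsub : s ⊆ Finset.Ico m (s.sup id + 1) := fun i hi =>
    Finset.mem_Ico.mpr ⟨hs i hi, Nat.lt_succ_of_le (Finset.le_sup (f := id) hi)⟩
  calc ∑ i ∈ s, (2 : ℝ)⁻¹ ^ i ≤ ∑ i ∈ Finset.Ico m (s.sup id + 1), (2 : ℝ)⁻¹ ^ i :=
        Finset.sum_le_sum_of_subset_of_nonneg hsub fun _ _ _ => by positivity
    _ ≤ 2⁻¹ ^ m / (1 - 2⁻¹) := geom_sum_Ico_le_of_lt_one (by norm_num) (by norm_num)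
    _ = 2 * 2⁻¹ ^ m := by ring

theorem ENNReal.ofReal_two_mul_inv_two_pow (m : ℕ) :
    ENNReal.ofReal (2 * (2 : ℝ)⁻¹ ^ m) = 2 ^ (1 - (m : ℤ)) := by
  rw [ENNReal.ofReal_mul zero_le_two, ENNReal.ofReal_pow (by norm_num),
    ENNReal.ofReal_inv_of_pos zero_lt_two, ENNReal.ofReal_ofNat, sub_eq_add_neg,
    ENNReal.zpow_add two_ne_zero ENNReal.ofNat_ne_top, zpow_one, ENNReal.zpow_neg, zpow_natCast,
    ENNReal.inv_pow]

theorem stmt_16_general {X : Type*} [NormedAddCommGroup X] [Lattice X]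
    [IsOrderedAddMonoid X]
    (e : ℕ → X) (he_pos : ∀ n, 0 ≤ e n) (he : ∀ n, ‖e n‖ ≤ (2 : ℝ)⁻¹ ^ n)
    (μ : Set ℕ → ℝ≥0∞)
    (hμ : ∀ A : Set ℕ, μ A =
      sInf {r : ℝ≥0∞ | ∃ x : X, 0 ≤ x ∧ (∀ i ∈ A, e i ≤ x) ∧ r = ENNReal.ofReal ‖x‖}) :
    μ ∅ = 0 ∧ (∀ A B : Set ℕ, A ⊆ B → μ A ≤ μ B) ∧
      (∀ A B : Set ℕ, μ (A ∪ B) ≤ μ A + μ B) ∧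
      (∀ A : Set ℕ, A.Finite → A.Nonempty → μ A ≤ (2 : ℝ≥0∞) ^ (1 - ((sInf A : ℕ) : ℤ))) := by
  obtain rfl : μ = upperBoundSubmeasure e := funext hμ
  refine ⟨upperBoundSubmeasure_empty e, fun A B => upperBoundSubmeasure_mono e,
    upperBoundSubmeasure_union_le e, fun A hA hne => ?_⟩
  have hmin : ∀ i ∈ hA.toFinset, sInf A ≤ i := fun i hi => Nat.sInf_le (hA.mem_toFinset.mp hi)
  calc upperBoundSubmeasure e A = upperBoundSubmeasure e hA.toFinset := by rw [hA.coe_toFinset]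
    _ ≤ ENNReal.ofReal (∑ i ∈ hA.toFinset, ‖e i‖) := upperBoundSubmeasure_le_sum_norm he_pos _
    _ ≤ ENNReal.ofReal (2 * 2⁻¹ ^ sInf A) := ENNReal.ofReal_le_ofReal <|
        (Finset.sum_le_sum fun i _ => he i).trans (sum_inv_two_pow_le_of_forall_le hmin)
    _ = 2 ^ (1 - ((sInf A : ℕ) : ℤ)) := ENNReal.ofReal_two_mul_inv_two_pow _

theorem stmt_16 {X : Type*} [NormedAddCommGroup X] [Lattice X] [HasSolidNorm X]
    [IsOrderedAddMonoid X]
    (e : ℕ → X) (he_pos : ∀ n, 0 ≤ e n) (he : ∀ n, ‖e n‖ ≤ (2 : ℝ)⁻¹ ^ n)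
    (μ : Set ℕ → ℝ≥0∞)
    (hμ : ∀ A : Set ℕ, μ A =
      sInf {r : ℝ≥0∞ | ∃ x : X, 0 ≤ x ∧ (∀ i ∈ A, e i ≤ x) ∧ r = ENNReal.ofReal ‖x‖}) :
    μ ∅ = 0 ∧ (∀ A B : Set ℕ, A ⊆ B → μ A ≤ μ B) ∧
      (∀ A B : Set ℕ, μ (A ∪ B) ≤ μ A + μ B) ∧
      (∀ A : Set ℕ, A.Finite → A.Nonempty → μ A ≤ (2 : ℝ≥0∞) ^ (1 - ((sInf A : ℕ) : ℤ))) :=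
  stmt_16_general e he_pos he μ hμ
end

section
/- Let X be a normed lattice in which every norm-null sequence has an order bounded subsequence, but which is not majorizing in its norm completion. Then there exists a positive sequence (e_n) in X with ‖e_n‖ ≤ 2^{−n} for all n such that (e_n) is not order bounded. -/
/-!
Pick `z` in the completion that no `f x` majorizes and approximate it fast: `f (x n) → z` with
`‖x (n + 1) - x n‖ ≤ 4⁻ⁿ`. The positive increments `pₙ = (x (n + 1) - x n)⁺` then give
`eₙ = 2ⁿ • pₙ` with `‖eₙ‖ ≤ 2⁻ⁿ`. If all `eₙ ≤ b`, then `pₙ ≤ 2⁻ⁿ b⁺` in effect, so every partial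
sum of the `pₙ` is at most `2 • b⁺`, hence `x N ≤ x 0 + 2 • b⁺` for all `N`; as the positive cone is
closed, `z ≤ f (x 0 + 2 • b⁺)`, a contradiction.
-/

open Filter Topology

section LatticeOrderedGroup

variable {α : Type*} [Lattice α] [AddCommGroup α] [IsOrderedAddMonoid α]

theorem nonneg_of_nonneg_two_pow_nsmul {a : α} : ∀ k : ℕ, 0 ≤ 2 ^ k • a → 0 ≤ a
  | 0, h => by simpa using h
  | k + 1, h => nonneg_of_nonneg_two_pow_nsmul k <|
      nsmul_two_semiclosed <| by rwa [← mul_nsmul, ← pow_succ]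

theorem le_of_two_pow_nsmul_le {a b : α} (k : ℕ) (h : 2 ^ k • a ≤ 2 ^ k • b) : a ≤ b := by
  rw [← sub_nonneg] at h ⊢
  exact nonneg_of_nonneg_two_pow_nsmul k (by rwa [nsmul_sub])

/-- Lattice-ordered groups need not be divisible, so `pₙ ≤ 2⁻ⁿ • b` is expressed as `2ⁿ • pₙ ≤ b`. -/
theorem sum_range_le_two_nsmul_of_two_pow_nsmul_le {p : ℕ → α} {b : α} (hb : 0 ≤ b)
    (hp : ∀ n, 2 ^ n • p n ≤ b) (N : ℕ) : ∑ n ∈ Finset.range N, p n ≤ 2 • b := by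
  have scaled : ∀ N, 2 ^ N • ∑ n ∈ Finset.range N, p n + 2 • b ≤ 2 ^ (N + 1) • b := by
    intro N
    induction N with
    | zero => simp
    | succ N ih =>
      calc 2 ^ (N + 1) • ∑ n ∈ Finset.range (N + 1), p n + 2 • b
          = 2 • (2 ^ N • ∑ n ∈ Finset.range N, p n) + 2 • (2 ^ N • p N) + 2 • b := by
            rw [Finset.sum_range_succ, pow_succ, mul_nsmul, nsmul_add, nsmul_add]
        _ ≤ 2 • (2 ^ N • ∑ n ∈ Finset.range N, p n) + 2 • b + 2 • b := by
            gcongr; exact hp N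
        _ = 2 • (2 ^ N • ∑ n ∈ Finset.range N, p n + 2 • b) := by rw [nsmul_add, add_assoc, ← two_nsmul (2 • b)]
        _ ≤ 2 • (2 ^ (N + 1) • b) := nsmul_le_nsmul_right ih 2
        _ = 2 ^ (N + 1 + 1) • b := by rw [← mul_nsmul, pow_succ _ (N + 1)]
  refine le_of_two_pow_nsmul_le N ?_
  calc 2 ^ N • ∑ n ∈ Finset.range N, p n
      ≤ 2 ^ N • ∑ n ∈ Finset.range N, p n + 2 • b := le_add_of_nonneg_right (nsmul_nonneg hb 2)
    _ ≤ 2 ^ (N + 1) • b := scaled N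
    _ = 2 ^ N • 2 • b := by rw [← mul_nsmul, pow_succ']

theorem le_add_two_nsmul_of_two_pow_nsmul_posPart_sub_le {x : ℕ → α} {b : α} (hb : 0 ≤ b)
    (hx : ∀ n, 2 ^ n • (x (n + 1) - x n)⁺ ≤ b) (N : ℕ) : x N ≤ x 0 + 2 • b := by
  have increments : x N - x 0 ≤ ∑ n ∈ Finset.range N, (x (n + 1) - x n)⁺ := by
    rw [← Finset.sum_range_sub]
    exact Finset.sum_le_sum fun n _ => le_posPart _
  rw [← sub_le_iff_le_add']
  exact increments.trans (sum_range_le_two_nsmul_of_two_pow_nsmul_le hb hx N)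

end LatticeOrderedGroup

theorem norm_two_pow_nsmul_posPart_le {α : Type*} [NormedAddCommGroup α] [Lattice α]
    [IsOrderedAddMonoid α] [HasSolidNorm α] {a : α} {n : ℕ} (ha : ‖a‖ ≤ (4 : ℝ)⁻¹ ^ n) :
    ‖2 ^ n • a⁺‖ ≤ (2 : ℝ)⁻¹ ^ n := by
  have hpos : ‖a⁺‖ ≤ ‖a‖ := by simpa using lipschitzWith_posPart.norm_sub_le a 0
  calc ‖2 ^ n • a⁺‖ ≤ ((2 ^ n : ℕ) : ℝ) * ‖a⁺‖ := norm_nsmul_le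
    _ ≤ 2 ^ n * (4 : ℝ)⁻¹ ^ n := by push_cast; gcongr; exact hpos.trans ha
    _ = (2 : ℝ)⁻¹ ^ n := by rw [← mul_pow]; norm_num

theorem DenseRange.exists_seq_tendsto_forall_dist_succ_le {β M : Type*} [PseudoMetricSpace M]
    {f : β → M} (hf : DenseRange f) (z : M) {ε : ℕ → ℝ} (hε_pos : ∀ n, 0 < ε n)
    (hε_anti : Antitone ε) (hε_lim : Tendsto ε atTop (𝓝 0)) :
    ∃ x : ℕ → β, Tendsto (fun n => f (x n)) atTop (𝓝 z) ∧
      ∀ n, dist (f (x (n + 1))) (f (x n)) ≤ ε n := by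
  choose x hx using fun n => hf.exists_dist_lt z (half_pos (hε_pos n))
  refine ⟨x, ?_, fun n => ?_⟩
  · rw [tendsto_iff_dist_tendsto_zero]
    refine squeeze_zero (fun _ => dist_nonneg) (fun n => ?_) hε_lim
    rw [dist_comm]
    exact (hx n).le.trans (half_le_self (hε_pos n).le)
  · calc dist (f (x (n + 1))) (f (x n)) ≤ dist z (f (x (n + 1))) + dist z (f (x n)) :=
          dist_triangle_left _ _ _
      _ ≤ ε n / 2 + ε n / 2 := by
          gcongr
          · exact (hx (n + 1)).le.trans (by gcongr; exact hε_anti n.le_succ)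
          · exact (hx n).le
      _ = ε n := add_halves _

theorem stmt_18_general {X Y : Type*} [NormedAddCommGroup X] [Lattice X]
    [IsOrderedAddMonoid X] [HasSolidNorm X]
    [NormedAddCommGroup Y] [Lattice Y] [IsOrderedAddMonoid Y] [HasSolidNorm Y]
    (f : X → Y) (hf_iso : Isometry f)
    (hf_sup : ∀ a b : X, f (a ⊔ b) = f a ⊔ f b)
    (hf_dense : DenseRange f)
    (hnotmaj : ¬ ∀ z : Y, ∃ x : X, z ≤ f x) :
    ∃ e : ℕ → X, (∀ n, 0 ≤ e n) ∧ (∀ n, ‖e n‖ ≤ (2 : ℝ)⁻¹ ^ n) ∧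
      ¬ ∃ a b : X, ∀ n, e n ∈ Set.Icc a b := by
  push Not at hnotmaj
  obtain ⟨z, hz⟩ := hnotmaj
  obtain ⟨x, hxz, hx_step⟩ := hf_dense.exists_seq_tendsto_forall_dist_succ_le z
    (ε := fun n => (4 : ℝ)⁻¹ ^ n) (fun n => by positivity)
    (fun _ _ h => pow_le_pow_of_le_one (by norm_num) (by norm_num) h)
    (tendsto_pow_atTop_nhds_zero_of_lt_one (by norm_num) (by norm_num))
  refine ⟨fun n => 2 ^ n • (x (n + 1) - x n)⁺, fun n => nsmul_nonneg (posPart_nonneg _) _,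
    fun n => norm_two_pow_nsmul_posPart_le ?_, ?_⟩
  · rw [← dist_eq_norm, ← hf_iso.dist_eq]
    exact hx_step n
  · rintro ⟨_, b, hb⟩
    have hf_mono : Monotone f := fun a b hab => by
      rw [← sup_eq_right.2 hab, hf_sup]
      exact le_sup_left
    have hx_le : ∀ N, x N ≤ x 0 + 2 • b⁺ :=
      le_add_two_nsmul_of_two_pow_nsmul_posPart_sub_le (posPart_nonneg b)
        fun n => (hb n).2.trans (le_posPart b)
    exact hz _ (le_of_tendsto hxz (Eventually.of_forall fun N => hf_mono (hx_le N)))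

theorem stmt_18 {X Y : Type*} [NormedAddCommGroup X] [Lattice X]
    [IsOrderedAddMonoid X] [HasSolidNorm X]
    [NormedAddCommGroup Y] [Lattice Y] [IsOrderedAddMonoid Y] [HasSolidNorm Y]
    [CompleteSpace Y]
    (f : X → Y) (hf_iso : Isometry f)
    (hf_add : ∀ a b : X, f (a + b) = f a + f b)
    (hf_sup : ∀ a b : X, f (a ⊔ b) = f a ⊔ f b)
    (hf_dense : DenseRange f)
    (hsub : ∀ x : ℕ → X, Tendsto (fun n => ‖x n‖) atTop (𝓝 0) →
      ∃ φ : ℕ → ℕ, StrictMono φ ∧ ∃ a b : X, ∀ n, x (φ n) ∈ Set.Icc a b)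
    (hnotmaj : ¬ ∀ z : Y, ∃ x : X, z ≤ f x) :
    ∃ e : ℕ → X, (∀ n, 0 ≤ e n) ∧ (∀ n, ‖e n‖ ≤ (2 : ℝ)⁻¹ ^ n) ∧
      ¬ ∃ a b : X, ∀ n, e n ∈ Set.Icc a b :=
  stmt_18_general f hf_iso hf_sup hf_dense hnotmaj
end
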